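/- arXiv:2510.17417 — 4 statements merged into one kernel-verified Lean document; each statement's English description precedes it below -/
import Mathlib

section
/- For an ordered topological space (S, ≤) with open cones (i.e. ↑U and ↓U are open whenever U is open), equipped with the Egli-Milner order U ⊴ V iff U ⊆ ↓V and V ⊆ ↑U, the localic cones of the induced ordered locale coincide with the pointwise cones: ⇑U = ↑U and ⇓U = ↓U for all open U. -/
open TopologicalSpace

/-- Pointwise upset. -/
def upS {S : Type*} [Preorder S] (A : Set S) : Set S := {x | ∃ a ∈ A, a ≤ x}

/-- Pointwise downset. -/
def downS {S : Type*} [Preorder S] (A : Set S) : Set S := {x | ∃ a ∈ A, x ≤ a}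

/-- The Egli-Milner order on open sets. -/
def EM {S : Type*} [TopologicalSpace S] [Preorder S] (U V : Opens S) : Prop :=
  (U : Set S) ⊆ downS (V : Set S) ∧ (V : Set S) ⊆ upS (U : Set S)

/-- In an ordered space with open cones, the localic cones of the induced ordered
locale coincide with the pointwise cones. -/
theorem localic_cones_eq_pointwise {S : Type*} [TopologicalSpace S] [Preorder S]
    (hoc : ∀ U : Set S, IsOpen U → IsOpen (upS U) ∧ IsOpen (downS U))
    (U : Opens S) :
    ((sSup {V | EM U V} : Opens S) : Set S) = upS (U : Set S) ∧
    ((sSup {W | EM W U} : Opens S) : Set S) = downS (U : Set S) := by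
  obtain ⟨hup, hdown⟩ := hoc U U.isOpen
  constructor
  · apply subset_antisymm
    · simp only [Opens.coe_sSup, Set.iUnion_subset_iff]
      intro V hV
      exact hV.2
    · have hmem : (⟨upS (U : Set S), hup⟩ : Opens S) ∈ {V | EM U V} := by
        constructor
        · intro x hx
          exact ⟨x, ⟨x, hx, le_refl x⟩, le_refl x⟩
        · exact fun x hx => hx
      intro x hx
      simp only [Opens.coe_sSup, Set.mem_iUnion]
      exact ⟨_, hmem, hx⟩
  · apply subset_antisymm
    · simp only [Opens.coe_sSup, Set.iUnion_subset_iff]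
      intro W hW
      exact hW.1
    · have hmem : (⟨downS (U : Set S), hdown⟩ : Opens S) ∈ {W | EM W U} := by
        constructor
        · exact fun x hx => hx
        · intro x hx
          exact ⟨x, ⟨x, hx, le_refl x⟩, le_refl x⟩
      intro x hx
      simp only [Opens.coe_sSup, Set.mem_iUnion]
      exact ⟨_, hmem, hx⟩
end

section
/- If (S, ≤) is an ordered space with open cones, then the induced ordered locale satisfies axiom (C-∨): ⇑(⋁ᵢ Uᵢ) = ⋁ᵢ ⇑Uᵢ and ⇓(⋁ᵢ Uᵢ) = ⋁ᵢ ⇓Uᵢ for any family of opens (Uᵢ). -/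
open TopologicalSpace

def lUp {α : Type*} [Order.Frame α] (R : α → α → Prop) (U : α) : α := sSup {V | R U V}

def lDown {α : Type*} [Order.Frame α] (R : α → α → Prop) (U : α) : α := sSup {W | R W U}

lemma lUp_eq {S : Type*} [TopologicalSpace S] [Preorder S]
    (hoc : ∀ U : Set S, IsOpen U → IsOpen (upS U) ∧ IsOpen (downS U))
    (V : Opens S) : lUp EM V = ⟨upS (V : Set S), (hoc V V.isOpen).1⟩ := by
  apply le_antisymm
  · apply sSup_le
    intro W hW
    exact hW.2
  · apply le_sSup
    constructor
    · intro x hx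
      exact ⟨x, ⟨x, hx, le_refl x⟩, le_refl x⟩
    · exact subset_rfl

lemma lDown_eq {S : Type*} [TopologicalSpace S] [Preorder S]
    (hoc : ∀ U : Set S, IsOpen U → IsOpen (upS U) ∧ IsOpen (downS U))
    (V : Opens S) : lDown EM V = ⟨downS (V : Set S), (hoc V V.isOpen).2⟩ := by
  apply le_antisymm
  · apply sSup_le
    intro W hW
    exact hW.1
  · apply le_sSup
    constructor
    · exact subset_rfl
    · intro x hx
      exact ⟨x, ⟨x, hx, le_refl x⟩, le_refl x⟩

lemma upS_iUnion {S : Type*} [Preorder S] {ι : Type*} (A : ι → Set S) :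
    upS (⋃ i, A i) = ⋃ i, upS (A i) := by
  ext x
  simp only [upS, Set.mem_iUnion, Set.mem_setOf_eq]
  tauto

lemma downS_iUnion {S : Type*} [Preorder S] {ι : Type*} (A : ι → Set S) :
    downS (⋃ i, A i) = ⋃ i, downS (A i) := by
  ext x
  simp only [downS, Set.mem_iUnion, Set.mem_setOf_eq]
  tauto

/-- In an ordered space with open cones, the induced ordered locale satisfies
axiom (C-∨): the localic cones preserve arbitrary joins. -/
theorem localic_cones_preserve_joins {S : Type*} [TopologicalSpace S] [Preorder S]
    (hoc : ∀ U : Set S, IsOpen U → IsOpen (upS U) ∧ IsOpen (downS U))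
    (ι : Type*) (U : ι → Opens S) :
    lUp EM (⨆ i, U i) = ⨆ i, lUp EM (U i) ∧
    lDown EM (⨆ i, U i) = ⨆ i, lDown EM (U i) := by
  constructor
  · rw [lUp_eq hoc]
    apply Opens.ext
    simp only [Opens.coe_iSup, lUp_eq hoc]
    simp only [Opens.coe_mk]
    exact upS_iUnion _
  · rw [lDown_eq hoc]
    apply Opens.ext
    simp only [Opens.coe_iSup, lDown_eq hoc]
    simp only [Opens.coe_mk]
    exact downS_iUnion _
end

section
/- In a parallel ordered locale, U ∧ ⇓V = ∅ if and only if ⇑U ∧ V = ∅, for all opens U, V. -/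
def AxV {α : Type*} [Order.Frame α] (R : α → α → Prop) : Prop :=
  ∀ {ι : Type*} (U V : ι → α), (∀ i, R (U i) (V i)) → R (⨆ i, U i) (⨆ i, V i)

def WedgeP {α : Type*} [Order.Frame α] (R : α → α → Prop) : Prop :=
  ∀ U V V' : α, U ≤ V → R V V' → ∃ U', R U U' ∧ U' ≤ V'

def WedgeM {α : Type*} [Order.Frame α] (R : α → α → Prop) : Prop :=
  ∀ U' V V' : α, U' ≤ V' → R V V' → ∃ U, R U U' ∧ U ≤ V

def AxEmpty {α : Type*} [Order.Frame α] (R : α → α → Prop) : Prop :=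
  ∀ U V : α, R U ⊥ → R ⊥ V → U = ⊥ ∧ V = ⊥

/-- In a parallel ordered locale, U ∧ ⇓V = ∅ iff ⇑U ∧ V = ∅. -/
theorem cones_are_parallel {α : Type*} [Order.Frame α] (R : α → α → Prop)
    (hrefl : ∀ U, R U U)
    (htrans : ∀ {U V W}, R U V → R V W → R U W)
    (hV : AxV R) (hWp : WedgeP R) (hWm : WedgeM R) (hE : AxEmpty R) (U V : α) :
    U ⊓ lDown R V = ⊥ ↔ lUp R U ⊓ V = ⊥ := by
  have hsup : ∀ {a b c d : α}, R a b → R c d → R (a ⊔ c) (b ⊔ d) := by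
    intro a b c d hab hcd
    have := hV (fun i : ULift Bool => cond i.down a c) (fun i => cond i.down b d)
      (by rintro ⟨i⟩; cases i <;> simpa)
    have e1 : (⨆ i : ULift Bool, cond i.down a c) = a ⊔ c := by
      rw [← (Equiv.ulift (α := Bool)).symm.iSup_comp]; simp [iSup_bool_eq]
    have e2 : (⨆ i : ULift Bool, cond i.down b d) = b ⊔ d := by
      rw [← (Equiv.ulift (α := Bool)).symm.iSup_comp]; simp [iSup_bool_eq]
    rwa [e1, e2] at this
  constructor
  · intro h
    rw [lUp, sSup_inf_eq]
    rw [iSup₂_eq_bot]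
    intro V' hV'
    obtain ⟨W, hW, hWU⟩ := hWm (V' ⊓ V) U V' inf_le_left hV'
    have hWV : R (W ⊔ V) V := by simpa using hsup hW (hrefl V)
    have hWle : W ≤ lDown R V :=
      le_trans le_sup_left (le_sSup (by exact hWV))
    have : W = ⊥ := le_bot_iff.mp (h ▸ le_inf hWU hWle)
    subst this
    exact (hE ⊥ (V' ⊓ V) (hrefl ⊥) hW).2
  · intro h
    rw [lDown, inf_sSup_eq]
    rw [iSup₂_eq_bot]
    intro W hW
    obtain ⟨V', hV', hV'le⟩ := hWp (U ⊓ W) W V inf_le_right hW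
    have hUV' : R U (V' ⊔ U) := by simpa using hsup hV' (hrefl U)
    have hle : V' ≤ lUp R U :=
      le_trans le_sup_left (le_sSup (by exact hUV'))
    have : V' = ⊥ := le_bot_iff.mp (h ▸ le_inf hle hV'le)
    subst this
    exact (hE (U ⊓ W) ⊥ hV' (hrefl ⊥)).1
end

section
/- Path restriction is functorial: if p is a path in a parallel ordered locale and W ⊑ V ⊑ p_⊤ (the endpoint of p), then p|_W = (p|_V)|_W, where p|_W is defined by (p|_W)_N := W and (p|_W)ₙ := pₙ ∧ ⇓(p|_W)ₙ₊₁ recursively. -/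
/-- Auxiliary downward recursion for path restriction, counting back from the endpoint. -/
def restrictAux {α : Type*} [Order.Frame α] (Dn : α → α) (p : ℕ → α) (N : ℕ) (W : α) :
    ℕ → α
  | 0 => W
  | k + 1 => p (N - (k + 1)) ⊓ Dn (restrictAux Dn p N W k)

/-- The restriction `p|_W` of a path `p` of length `N` to an open `W ⊑ p_N`:
`(p|_W)_N = W` and `(p|_W)ₙ = pₙ ∧ ⇓(p|_W)ₙ₊₁`. -/
def restrictPath {α : Type*} [Order.Frame α] (Dn : α → α) (p : ℕ → α) (N : ℕ) (W : α)
    (n : ℕ) : α :=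
  restrictAux Dn p N W (N - n)

/-- `lDown R` is monotone whenever `R` satisfies `AxV` and is reflexive. -/
lemma lDown_mono {α : Type*} [Order.Frame α] (R : α → α → Prop)
    (hrefl : ∀ U, R U U) (hV : AxV R) {U U' : α} (h : U ≤ U') :
    lDown R U ≤ lDown R U' := by
  apply sSup_le
  intro X hX
  have e : ∀ a b : α, (⨆ x : ULift Bool, cond x.down a b) = a ⊔ b := by
    intro a b
    apply le_antisymm
    · exact iSup_le (by rintro ⟨_ | _⟩ <;> simp)
    · exact sup_le (le_iSup_of_le ⟨true⟩ le_rfl) (le_iSup_of_le ⟨false⟩ le_rfl)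
  have h1 := hV (fun x : ULift Bool => cond x.down X U') (fun x : ULift Bool => cond x.down U U')
    (by rintro ⟨b⟩; cases b
        · exact hrefl U'
        · exact hX)
  rw [e, e, sup_eq_right.mpr h] at h1
  calc X ≤ X ⊔ U' := le_sup_left
    _ ≤ lDown R U' := le_sSup h1

/-- Path restriction is functorial: if W ⊑ V ⊑ p_⊤ then p|_W = (p|_V)|_W. -/
theorem restrict_functorial {α : Type*} [Order.Frame α] (R : α → α → Prop)
    (hrefl : ∀ U, R U U)
    (htrans : ∀ {U V W}, R U V → R V W → R U W)
    (hV : AxV R) (hWp : WedgeP R) (hWm : WedgeM R) (hE : AxEmpty R)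
    (p : ℕ → α) (N : ℕ)
    (hpath : ∀ n < N, R (p n) (p (n + 1)))
    (hnb : ∀ n ≤ N, p n ≠ ⊥)
    (W V : α) (hWV : W ≤ V) (hVp : V ≤ p N) :
    ∀ n ≤ N,
      restrictPath (lDown R) p N W n =
        restrictPath (lDown R) (restrictPath (lDown R) p N V) N W n := by
  set Dn := lDown R with hDn
  set q := restrictPath Dn p N V with hq
  -- monotonicity of the auxiliary restriction in the endpoint
  have hmono : ∀ k, restrictAux Dn p N W k ≤ restrictAux Dn p N V k := by
    intro k
    induction k with
    | zero => exact hWV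
    | succ k ih =>
      simp only [restrictAux]
      exact inf_le_inf_left _ (lDown_mono R hrefl hV ih)
  have key : ∀ k ≤ N, restrictAux Dn q N W k = restrictAux Dn p N W k := by
    intro k hk
    induction k with
    | zero => rfl
    | succ k ih =>
      have hkN : k ≤ N := Nat.le_of_succ_le hk
      have hqval : q (N - (k + 1)) = restrictAux Dn p N V (k + 1) := by
        rw [hq, restrictPath, Nat.sub_sub_self hk]
      simp only [restrictAux, ih hkN, hqval]
      rw [inf_assoc]
      congr 1
      exact inf_eq_right.mpr (lDown_mono R hrefl hV (hmono k))
  intro n _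
  rw [restrictPath, restrictPath, key (N - n) (Nat.sub_le N n)]
end
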